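/- arXiv:2105.08029 — 4 statements merged into one kernel-verified Lean document; each statement's English description precedes it below -/
import Mathlib

section
/- Let 1 < p < ∞, let ω be a radial weight, and let ν : [0,1) → (0,∞) be a measurable function with ν ∈ L¹_ω([0,1)). If there is a constant C > 0 such that ‖M_{ω₁,rad}(f)‖_{L^p_{ων}} ≤ C ‖f‖_{L^p_{ων}} for every f ∈ L^p_{ων}, then A_p(ω,ων) ≤ C. -/
open MeasureTheory Set Metric
open scoped ENNReal NNReal

noncomputable section

/-- `ω̂(r) = ∫_r^1 ω(s) ds`. -/
def hatw (w : ℝ → ℝ) (r : ℝ) : ℝ := ∫ s in Set.Ioo r 1, w s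

/-- `ω̂₁(r) = ∫_r^1 s ω(s) ds`. -/
def hat1 (w : ℝ → ℝ) (r : ℝ) : ℝ := ∫ s in Set.Ioo r 1, s * w s

/-- A radial weight: nonnegative, integrable on `[0,1)`, with `ω̂(r) > 0` for `0 ≤ r < 1`. -/
def IsRadialWeight (w : ℝ → ℝ) : Prop :=
  (∀ r ∈ Set.Ico (0:ℝ) 1, 0 ≤ w r) ∧ MeasureTheory.IntegrableOn w (Set.Ico (0:ℝ) 1) ∧
    ∀ r ∈ Set.Ico (0:ℝ) 1, 0 < hatw w r

/-- The `L^p_ν` norm (with `dA` = area measure divided by `π`) of a real-valued function on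
the unit disc. -/
def LpR (p : ℝ) (v : ℝ → ℝ) (f : ℂ → ℝ) : ℝ≥0∞ :=
  ((∫⁻ z in Metric.ball (0:ℂ) 1, ENNReal.ofReal (|f z| ^ p * v ‖z‖)) /
    ENNReal.ofReal Real.pi) ^ (1 / p)

/-- The `L^p_ν` norm of an `ℝ≥0∞`-valued function on the unit disc. -/
def LpE (p : ℝ) (v : ℝ → ℝ) (g : ℂ → ℝ≥0∞) : ℝ≥0∞ :=
  ((∫⁻ z in Metric.ball (0:ℂ) 1, g z ^ p * ENNReal.ofReal (v ‖z‖)) /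
    ENNReal.ofReal Real.pi) ^ (1 / p)

/-- The averaging operator `H_ω(f)(z) = (1/ω̂₁(|z|)) ∫_{|z|}^1 f(s z/|z|) s ω(s) ds`. -/
def HE (w : ℝ → ℝ) (f : ℂ → ℝ) (z : ℂ) : ℝ≥0∞ :=
  (∫⁻ s in Set.Ioo ‖z‖ 1, ENNReal.ofReal (f ((s / ‖z‖) • z) * (s * w s))) /
    ENNReal.ofReal (hat1 w ‖z‖)

/-- The adjoint `H*_ω(f)(z) = ∫_0^{|z|} f(s z/|z|) s ω(s)/ω̂₁(s) ds`. -/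
def HstarE (w : ℝ → ℝ) (f : ℂ → ℝ) (z : ℂ) : ℝ≥0∞ :=
  ∫⁻ s in Set.Ioo 0 ‖z‖,
    ENNReal.ofReal (f ((s / ‖z‖) • z) * (s * w s)) / ENNReal.ofReal (hat1 w s)

/-- The Stieltjes-type operator
`S_{ω₁,rad}(f)(z) = ∫_0^1 f(s z/|z|) s ω(s)/(ω̂₁(s)+ω̂₁(|z|)) ds`. -/
def SE (w : ℝ → ℝ) (f : ℂ → ℝ) (z : ℂ) : ℝ≥0∞ :=
  ∫⁻ s in Set.Ioo (0:ℝ) 1,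
    ENNReal.ofReal (f ((s / ‖z‖) • z) * (s * w s)) /
      ENNReal.ofReal (hat1 w s + hat1 w ‖z‖)

/-- The Hörmander-type maximal function
`M_{ω₁,rad}(f)(z) = sup_{0 ≤ b < |z|} (1/ω̂₁(b)) ∫_b^1 |f(s z/|z|)| s ω(s) ds`. -/
def MradE (w : ℝ → ℝ) (f : ℂ → ℝ) (z : ℂ) : ℝ≥0∞ :=
  ⨆ b ∈ Set.Ico (0:ℝ) ‖z‖,
    (∫⁻ s in Set.Ioo b 1, ENNReal.ofReal (|f ((s / ‖z‖) • z)| * (s * w s))) /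
      ENNReal.ofReal (hat1 w b)

/-- `A_p(ω,ων) = sup_{0≤r<1} (∫_r¹ s ω ν)^{1/p} (∫_r¹ s ω ν^{-p'/p})^{1/p'} / ω̂₁(r)`,
for a positive function `ν` (note `p' = p/(p-1)` and `1/p' = 1 - 1/p`). -/
def Ap2 (p : ℝ) (w v : ℝ → ℝ) : ℝ≥0∞ :=
  ⨆ r ∈ Set.Ico (0:ℝ) 1,
    (∫⁻ s in Set.Ioo r 1, ENNReal.ofReal (s * w s * v s)) ^ (1 / p) *
      (∫⁻ s in Set.Ioo r 1,
        ENNReal.ofReal (s * w s * v s ^ (-(p / (p - 1)) / p))) ^ (1 - 1 / p) /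
      ENNReal.ofReal (hat1 w r)

/-!
Test the maximal inequality on the radial functions `f = 𝟙_{r < |z| < 1} · min (ν ^ (-p'/p), n)`.
For `|z| > r` the maximal function is at least `Bₙ / ω̂₁(r)` with `Bₙ = ∫_r^1 f(s) s ω(s) ds`,
while `f ^ (p - 1) ≤ ν⁻¹` gives `|f| ^ p ν ≤ f`. In polar coordinates the maximal inequality
becomes `(Bₙ / ω̂₁(r)) ^ p ∫_r^1 s ω ν ≤ C ^ p Bₙ`, that is
`(∫_r^1 s ω ν) ^ (1/p) Bₙ ^ (1/p') ≤ C ω̂₁(r)`, and monotone convergence lets `n → ∞`.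
-/

theorem lintegral_ball_comp_norm {g : ℝ → ℝ≥0∞}
    (hg : AEMeasurable g (volume.restrict (Ioo 0 1))) :
    ∫⁻ z in ball (0:ℂ) 1, g ‖z‖ =
      2 * ENNReal.ofReal Real.pi * ∫⁻ s in Ioo 0 1, ENNReal.ofReal s * g s := by
  set F : ℝ → ℝ≥0∞ := (Ioo 0 1).indicator fun s => ENNReal.ofReal s * g s
  have hF : AEMeasurable F (volume.restrict (Ioi 0)) := by
    rw [aemeasurable_indicator_iff measurableSet_Ioo, Measure.restrict_restrict measurableSet_Ioo,
      inter_eq_left.2 Ioo_subset_Ioi_self]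
    exact measurable_id.ennreal_ofReal.aemeasurable.mul hg
  calc ∫⁻ z in ball (0:ℂ) 1, g ‖z‖
      = ∫⁻ z, (ball (0:ℂ) 1).indicator (fun z => g ‖z‖) z :=
        (lintegral_indicator measurableSet_ball _).symm
    _ = ∫⁻ q in Complex.polarCoord.target,
          ENNReal.ofReal q.1 • (ball (0:ℂ) 1).indicator (fun z => g ‖z‖)
            (Complex.polarCoord.symm q) :=
        (Complex.lintegral_comp_polarCoord_symm _).symm
    _ = ∫⁻ q in Ioi 0 ×ˢ Ioo (-Real.pi) Real.pi, F q.1 * 1 := by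
        refine setLIntegral_congr_fun (measurableSet_Ioi.prod measurableSet_Ioo) fun q hq => ?_
        have hq1 : 0 < q.1 := hq.1
        by_cases h1 : q.1 < 1 <;> simp [F, indicator, abs_of_pos hq1, h1, hq1]
    _ = (∫⁻ s in Ioi 0, F s) * volume (Ioo (-Real.pi) Real.pi) := by
        rw [Measure.volume_eq_prod, ← Measure.prod_restrict,
          lintegral_prod_mul hF aemeasurable_const, setLIntegral_one]
    _ = _ := by
        rw [lintegral_indicator measurableSet_Ioo, Measure.restrict_restrict measurableSet_Ioo,
          inter_eq_left.2 Ioo_subset_Ioi_self, Real.volume_Ioo, sub_neg_eq_add, ← two_mul,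
          ENNReal.ofReal_mul zero_le_two, ENNReal.ofReal_ofNat, mul_comm]

theorem LpR_comp_norm (p : ℝ) (ν φ : ℝ → ℝ)
    (h : AEMeasurable (fun s => ENNReal.ofReal (|φ s| ^ p * ν s)) (volume.restrict (Ioo 0 1))) :
    LpR p ν (fun z => φ ‖z‖) =
      (2 * ∫⁻ s in Ioo 0 1, ENNReal.ofReal s * ENNReal.ofReal (|φ s| ^ p * ν s)) ^ (1 / p) := by
  rw [LpR, lintegral_ball_comp_norm h, mul_right_comm,
    ENNReal.mul_div_cancel_right (by simp [Real.pi_pos]) ENNReal.ofReal_ne_top]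

theorem LpE_comp_norm (p : ℝ) (ν : ℝ → ℝ) (g : ℝ → ℝ≥0∞)
    (h : AEMeasurable (fun s => g s ^ p * ENNReal.ofReal (ν s)) (volume.restrict (Ioo 0 1))) :
    LpE p ν (fun z => g ‖z‖) =
      (2 * ∫⁻ s in Ioo 0 1, ENNReal.ofReal s * (g s ^ p * ENNReal.ofReal (ν s))) ^ (1 / p) := by
  rw [LpE, lintegral_ball_comp_norm h, mul_right_comm,
    ENNReal.mul_div_cancel_right (by simp [Real.pi_pos]) ENNReal.ofReal_ne_top]

def radialMaximal (w φ : ℝ → ℝ) (t : ℝ) : ℝ≥0∞ :=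
  ⨆ b ∈ Ico (0:ℝ) t,
    (∫⁻ s in Ioo b 1, ENNReal.ofReal (|φ s| * (s * w s))) / ENNReal.ofReal (hat1 w b)

theorem MradE_comp_norm (w φ : ℝ → ℝ) :
    MradE w (fun z => φ ‖z‖) = fun z => radialMaximal w φ ‖z‖ := by
  funext z
  refine biSup_congr fun b hb => ?_
  have hz : 0 < ‖z‖ := hb.1.trans_lt hb.2
  congr 1
  refine setLIntegral_congr_fun measurableSet_Ioo fun s hs => ?_
  dsimp only
  rw [norm_smul, Real.norm_eq_abs, abs_of_nonneg (div_nonneg (hb.1.trans hs.1.le) hz.le),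
    div_mul_cancel₀ _ hz.ne']

theorem radialMaximal_monotone (w φ : ℝ → ℝ) : Monotone (radialMaximal w φ) :=
  fun _ _ h => biSup_mono fun _ hb => ⟨hb.1, hb.2.trans_le h⟩

theorem lintegral_radialMaximal_rpow_le {p C : ℝ} (hp : 0 < p) {w ν φ : ℝ → ℝ}
    (hν : AEMeasurable ν (volume.restrict (Ioo 0 1))) (hφ : Measurable φ)
    (hbdd : LpR p ν (fun z => φ ‖z‖) < ⊤ →
      LpE p ν (MradE w fun z => φ ‖z‖) ≤ ENNReal.ofReal C * LpR p ν (fun z => φ ‖z‖))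
    (hfin : ∫⁻ s in Ioo 0 1, ENNReal.ofReal s * ENNReal.ofReal (|φ s| ^ p * ν s) ≠ ⊤) :
    ∫⁻ s in Ioo 0 1, ENNReal.ofReal s * (radialMaximal w φ s ^ p * ENNReal.ofReal (ν s)) ≤
      ENNReal.ofReal C ^ p *
        ∫⁻ s in Ioo 0 1, ENNReal.ofReal s * ENNReal.ofReal (|φ s| ^ p * ν s) := by
  have hM := (radialMaximal_monotone w φ).measurable
  rw [MradE_comp_norm, LpE_comp_norm _ _ _ (by fun_prop),
    LpR_comp_norm _ _ _ (by fun_prop)] at hbdd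
  have h := hbdd (ENNReal.rpow_lt_top_of_nonneg (by positivity) (by finiteness))
  rwa [← ENNReal.rpow_rpow_inv hp.ne' (ENNReal.ofReal C), one_div, ← ENNReal.mul_rpow_of_nonneg _ _
    (by positivity), ENNReal.rpow_le_rpow_iff (by positivity), mul_left_comm,
    ENNReal.mul_le_mul_iff_right two_ne_zero ENNReal.ofNat_ne_top] at h

theorem rpow_mul_lintegral_le_lintegral_radialMaximal {p : ℝ} (hp : 0 ≤ p) (w φ ν : ℝ → ℝ)
    {r : ℝ} (hr : 0 ≤ r) :
    ((∫⁻ s in Ioo r 1, ENNReal.ofReal (|φ s| * (s * w s))) / ENNReal.ofReal (hat1 w r)) ^ p *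
        ∫⁻ s in Ioo r 1, ENNReal.ofReal (s * ν s) ≤
      ∫⁻ s in Ioo 0 1, ENNReal.ofReal s * (radialMaximal w φ s ^ p * ENNReal.ofReal (ν s)) := by
  refine (lintegral_const_mul_le _ _).trans <|
    (setLIntegral_mono' measurableSet_Ioo fun s hs => ?_).trans
      (lintegral_mono_set (Ioo_subset_Ioo_left hr))
  rw [ENNReal.ofReal_mul (hr.trans hs.1.le), mul_left_comm]
  gcongr
  exact le_iSup₂_of_le r ⟨hr, hs.1⟩ le_rfl

theorem Real.rpow_mul_le_self_of_le_rpow {p v m : ℝ} (hp : 1 < p) (hv : 0 < v) (hm0 : 0 ≤ m)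
    (hm : m ≤ v ^ (-(p / (p - 1)) / p)) : m ^ p * v ≤ m := by
  have he : -(p / (p - 1)) / p * (p - 1) = -1 := by
    field_simp [(by linarith : p - 1 ≠ 0), (by linarith : p ≠ 0)]
  calc m ^ p * v = m ^ (p - 1 + 1) * v := by rw [sub_add_cancel]
    _ = m ^ (p - 1) * v * m := by rw [Real.rpow_add_one' hm0 (by linarith)]; ring
    _ ≤ (v ^ (-(p / (p - 1)) / p)) ^ (p - 1) * v * m := by
        gcongr
    _ = m := by
        rw [← Real.rpow_mul hv.le, he, Real.rpow_neg_one, inv_mul_cancel₀ hv.ne', one_mul]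

theorem ENNReal.rpow_mul_rpow_div_le_of_div_rpow_mul_le {p : ℝ} (hp : 1 < p) {a b c d : ℝ≥0∞}
    (hb : b ≠ ⊤) (h : (b / d) ^ p * a ≤ c ^ p * b) : a ^ (1 / p) * b ^ (1 - 1 / p) / d ≤ c := by
  have hp0 : 0 < p := one_pos.trans hp
  rcases eq_or_ne b 0 with rfl | hb0
  · rw [ENNReal.zero_rpow_of_pos (by rw [sub_pos, div_lt_one hp0]; exact hp), mul_zero,
      ENNReal.zero_div]
    exact zero_le
  have hb' : b ^ (1 / p) ≠ 0 := (ENNReal.rpow_pos (pos_iff_ne_zero.2 hb0) hb).ne'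
  have hb'' : b ^ (1 / p) ≠ ⊤ := ENNReal.rpow_ne_top_of_nonneg (by positivity) hb
  have hroot : b / d * a ^ (1 / p) ≤ c * b ^ (1 / p) := by
    have := ENNReal.rpow_le_rpow h (one_div_nonneg.2 hp0.le)
    rw [ENNReal.mul_rpow_of_nonneg _ _ (by positivity), ENNReal.mul_rpow_of_nonneg _ _
      (by positivity), one_div, ENNReal.rpow_rpow_inv hp0.ne', ENNReal.rpow_rpow_inv hp0.ne']
      at this
    simpa only [one_div] using this
  have hsplit : b / d * a ^ (1 / p) = a ^ (1 / p) * b ^ (1 - 1 / p) / d * b ^ (1 / p) := by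
    have hb1 : b = b ^ (1 - 1 / p) * b ^ (1 / p) := by
      rw [← ENNReal.rpow_add _ _ hb0 hb, sub_add_cancel, ENNReal.rpow_one]
    conv_lhs => rw [hb1]
    simp only [div_eq_mul_inv]
    ring
  rw [hsplit] at hroot
  exact (ENNReal.mul_le_mul_iff_left hb' hb'').1 hroot

theorem lintegral_indicator_rpow_mul_le {p : ℝ} (hp : 1 < p) {w v m : ℝ → ℝ} {r : ℝ}
    (hr : 0 ≤ r) (hw : ∀ s ∈ Ioo r 1, 0 ≤ w s) (hv : ∀ s ∈ Ioo r 1, 0 < v s)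
    (hm0 : ∀ s ∈ Ioo r 1, 0 ≤ m s) (hm : ∀ s ∈ Ioo r 1, m s ≤ v s ^ (-(p / (p - 1)) / p)) :
    ∫⁻ s in Ioo 0 1,
        ENNReal.ofReal s * ENNReal.ofReal (|(Ioo r 1).indicator m s| ^ p * (w s * v s)) ≤
      ∫⁻ s in Ioo r 1, ENNReal.ofReal (s * w s * m s) := by
  calc _ ≤ ∫⁻ s in Ioo 0 1, (Ioo r 1).indicator (fun s => ENNReal.ofReal (s * w s * m s)) s :=
        lintegral_mono fun s => ?_
    _ = _ := by
        rw [lintegral_indicator measurableSet_Ioo, Measure.restrict_restrict measurableSet_Ioo,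
          inter_eq_left.2 (Ioo_subset_Ioo_left hr)]
  by_cases hs : s ∈ Ioo r 1
  · have hsw : 0 ≤ s * w s := mul_nonneg (hr.trans hs.1.le) (hw s hs)
    rw [indicator_of_mem hs, indicator_of_mem hs, abs_of_nonneg (hm0 s hs),
      ← ENNReal.ofReal_mul (hr.trans hs.1.le)]
    refine ENNReal.ofReal_le_ofReal ?_
    calc s * (m s ^ p * (w s * v s)) = s * w s * (m s ^ p * v s) := by ring
      _ ≤ s * w s * m s := mul_le_mul_of_nonneg_left
        (Real.rpow_mul_le_self_of_le_rpow hp (hv s hs) (hm0 s hs) (hm s hs)) hsw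
  · simp [indicator_of_notMem hs, Real.zero_rpow (one_pos.trans hp).ne']

theorem iSup_lintegral_mul_min_natCast {α : Type*} [MeasurableSpace α] {μ : Measure α}
    {f g : α → ℝ} (hf : AEMeasurable f μ) (hg : AEMeasurable g μ) (hg0 : ∀ᵐ x ∂μ, 0 ≤ g x) :
    ⨆ n : ℕ, ∫⁻ x, ENNReal.ofReal (g x * min (f x) n) ∂μ = ∫⁻ x, ENNReal.ofReal (g x * f x) ∂μ := by
  rw [← lintegral_iSup' (f := fun (n : ℕ) x => ENNReal.ofReal (g x * min (f x) n))
    (fun n => (hg.mul (hf.min aemeasurable_const)).ennreal_ofReal)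
    (hg0.mono fun x hx n k hnk => ENNReal.ofReal_le_ofReal
      (mul_le_mul_of_nonneg_left (min_le_min_left _ (Nat.cast_le.2 hnk)) hx))]
  refine lintegral_congr_ae (hg0.mono fun x hx => le_antisymm ?_ ?_)
  · exact iSup_le fun n => ENNReal.ofReal_le_ofReal
      (mul_le_mul_of_nonneg_left (min_le_left _ _) hx)
  · exact le_iSup_of_le ⌈f x⌉₊ (by rw [min_eq_left (Nat.le_ceil _)])

theorem Ap_ratio_truncated_le {p C : ℝ} (hp : 1 < p) {w v : ℝ → ℝ} (hw : IsRadialWeight w)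
    (hv : Measurable v) (hvpos : ∀ s ∈ Ico (0:ℝ) 1, 0 < v s)
    (hbdd : ∀ f : ℂ → ℝ, Measurable f → LpR p (fun s => w s * v s) f < ⊤ →
      LpE p (fun s => w s * v s) (MradE w f) ≤ ENNReal.ofReal C * LpR p (fun s => w s * v s) f)
    {r : ℝ} (hr : r ∈ Ico (0:ℝ) 1) (n : ℕ) :
    (∫⁻ s in Ioo r 1, ENNReal.ofReal (s * w s * v s)) ^ (1 / p) *
        (∫⁻ s in Ioo r 1, ENNReal.ofReal (s * w s * min (v s ^ (-(p / (p - 1)) / p)) n)) ^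
          (1 - 1 / p) / ENNReal.ofReal (hat1 w r) ≤ ENNReal.ofReal C := by
  obtain ⟨hw0, hwint, -⟩ := hw
  have hIoo : Ioo r 1 ⊆ Ico 0 1 := fun s hs => ⟨hr.1.trans hs.1.le, hs.2⟩
  set m : ℝ → ℝ := fun s => min (v s ^ (-(p / (p - 1)) / p)) n
  have hm0 : ∀ s ∈ Ioo r 1, 0 ≤ m s := fun s hs =>
    le_min (Real.rpow_nonneg (hvpos s (hIoo hs)).le _) n.cast_nonneg
  have hφ : Measurable ((Ioo r 1).indicator m) :=
    ((hv.pow_const _).min measurable_const).indicator measurableSet_Ioo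
  have hν : AEMeasurable (fun s => w s * v s) (volume.restrict (Ioo 0 1)) :=
    (hwint.aemeasurable.mono_set Ioo_subset_Ico_self).mul hv.aemeasurable
  have hmass : ∫⁻ s in Ioo r 1, ENNReal.ofReal (|(Ioo r 1).indicator m s| * (s * w s)) =
      ∫⁻ s in Ioo r 1, ENNReal.ofReal (s * w s * m s) :=
    setLIntegral_congr_fun measurableSet_Ioo fun s hs => by
      rw [indicator_of_mem hs, abs_of_nonneg (hm0 s hs), mul_comm]
  have hnorm := lintegral_indicator_rpow_mul_le hp hr.1 (fun s hs => hw0 s (hIoo hs))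
    (fun s hs => hvpos s (hIoo hs)) hm0 (fun s _ => min_le_left _ _)
  have hfin : ∫⁻ s in Ioo r 1, ENNReal.ofReal (s * w s * m s) ≠ ⊤ := by
    refine ne_top_of_le_ne_top ((hwint.mono_set hIoo).const_mul n).lintegral_lt_top.ne
      (setLIntegral_mono' measurableSet_Ioo fun s hs => ENNReal.ofReal_le_ofReal ?_)
    have hws := hw0 s (hIoo hs)
    have hms := hm0 s hs
    calc s * w s * m s ≤ 1 * w s * n := by
          gcongr
          exacts [hs.2.le, min_le_right _ _]
      _ = n * w s := by ring
  refine ENNReal.rpow_mul_rpow_div_le_of_div_rpow_mul_le hp hfin ?_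
  calc _ ≤ ∫⁻ s in Ioo 0 1, ENNReal.ofReal s *
          (radialMaximal w ((Ioo r 1).indicator m) s ^ p * ENNReal.ofReal (w s * v s)) := by
        simpa only [hmass, mul_assoc] using rpow_mul_lintegral_le_lintegral_radialMaximal
          (by positivity) w ((Ioo r 1).indicator m) (fun s => w s * v s) hr.1
    _ ≤ _ := lintegral_radialMaximal_rpow_le (by positivity) hν hφ
          (hbdd _ (hφ.comp measurable_norm)) (ne_top_of_le_ne_top hfin hnorm)
    _ ≤ _ := by gcongr

theorem Ap_ratio_le {p C : ℝ} (hp : 1 < p) {w v : ℝ → ℝ} (hw : IsRadialWeight w)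
    (hv : Measurable v) (hvpos : ∀ s ∈ Ico (0:ℝ) 1, 0 < v s)
    (hbdd : ∀ f : ℂ → ℝ, Measurable f → LpR p (fun s => w s * v s) f < ⊤ →
      LpE p (fun s => w s * v s) (MradE w f) ≤ ENNReal.ofReal C * LpR p (fun s => w s * v s) f)
    {r : ℝ} (hr : r ∈ Ico (0:ℝ) 1) :
    (∫⁻ s in Ioo r 1, ENNReal.ofReal (s * w s * v s)) ^ (1 / p) *
        (∫⁻ s in Ioo r 1, ENNReal.ofReal (s * w s * v s ^ (-(p / (p - 1)) / p))) ^ (1 - 1 / p) /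
        ENNReal.ofReal (hat1 w r) ≤ ENNReal.ofReal C := by
  have hIoo : Ioo r 1 ⊆ Ico 0 1 := fun s hs => ⟨hr.1.trans hs.1.le, hs.2⟩
  have hq : 0 < 1 - 1 / p := by
    rw [sub_pos, div_lt_one (one_pos.trans hp)]
    exact hp
  rw [← iSup_lintegral_mul_min_natCast (g := fun s => s * w s) (hv.pow_const _).aemeasurable
    (measurable_id.aemeasurable.mul (hw.2.1.aemeasurable.mono_set hIoo))
    ((ae_restrict_mem measurableSet_Ioo).mono fun s hs =>
      mul_nonneg (hr.1.trans hs.1.le) (hw.1 s (hIoo hs))),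
    ← ENNReal.orderIsoRpow_apply _ hq, OrderIso.map_iSup, ENNReal.mul_iSup, ENNReal.iSup_div]
  exact iSup_le fun n => Ap_ratio_truncated_le hp hw hv hvpos hbdd hr n

theorem Ap_le_of_maximal_bounded_general (p : ℝ) (hp : 1 < p) (w v : ℝ → ℝ)
    (hw : IsRadialWeight w) (hvm : Measurable v) (hvpos : ∀ s ∈ Set.Ico (0:ℝ) 1, 0 < v s)
    (C : ℝ)
    (hbdd : ∀ f : ℂ → ℝ, Measurable f → LpR p (fun s => w s * v s) f < ⊤ →
      LpE p (fun s => w s * v s) (MradE w f) ≤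
        ENNReal.ofReal C * LpR p (fun s => w s * v s) f) :
    Ap2 p w v ≤ ENNReal.ofReal C :=
  iSup₂_le fun _ hr => Ap_ratio_le hp hw hvm hvpos hbdd hr

/-- Let `1 < p < ∞`, `ω` a radial weight and `ν : [0,1) → (0,∞)` measurable
with `ν ∈ L¹_ω([0,1))`. If `‖M_{ω₁,rad}(f)‖_{L^p_{ων}} ≤ C ‖f‖_{L^p_{ων}}` for every
`f ∈ L^p_{ων}`, then `A_p(ω,ων) ≤ C`. -/
theorem Ap_le_of_maximal_bounded (p : ℝ) (hp : 1 < p) (w v : ℝ → ℝ)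
    (hw : IsRadialWeight w) (hvm : Measurable v) (hvpos : ∀ s ∈ Set.Ico (0:ℝ) 1, 0 < v s)
    (hvL1 : MeasureTheory.IntegrableOn (fun s => v s * w s) (Set.Ico (0:ℝ) 1))
    (C : ℝ) (hC : 0 < C)
    (hbdd : ∀ f : ℂ → ℝ, Measurable f → LpR p (fun s => w s * v s) f < ⊤ →
      LpE p (fun s => w s * v s) (MradE w f) ≤
        ENNReal.ofReal C * LpR p (fun s => w s * v s) f) :
    Ap2 p w v ≤ ENNReal.ofReal C :=
  Ap_le_of_maximal_bounded_general p hp w v hw hvm hvpos C hbdd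

end
end

section
/- Let ω be a radial weight and let f be a nonnegative measurable function on 𝔻. Then M_{ω₁,rad}(f)(z) ≤ 2 S_{ω₁,rad}(f)(z) for every z ∈ 𝔻∖{0}. -/
/-!
Since `ω̂₁` is decreasing on `[0, 1)`, for `0 ≤ b < |z|` and `b < s < 1` the denominator
`ω̂₁(s) + ω̂₁(|z|)` of the Stieltjes kernel is at most `2 ω̂₁(b)`. Hence the average of `f` over
`(b, 1)` against `s ω(s) ds / ω̂₁(b)` is at most twice the integral of `f` over `(b, 1)` against the
Stieltjes kernel, and enlarging `(b, 1)` to `(0, 1)` gives the bound uniformly in `b`.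
-/

open MeasureTheory Set Metric
open scoped ENNReal NNReal

noncomputable section

lemma lintegral_div_le_lintegral_div_of_ae_le {α : Type*} [MeasurableSpace α] {μ : Measure α}
    {g d : α → ℝ≥0∞} {c : ℝ≥0∞} (hd : ∀ᵐ x ∂μ, d x ≤ c) :
    (∫⁻ x, g x ∂μ) / c ≤ ∫⁻ x, g x / d x ∂μ :=
  calc (∫⁻ x, g x ∂μ) / c ≤ ∫⁻ x, g x / c ∂μ := lintegral_mul_const_le _ _
    _ ≤ ∫⁻ x, g x / d x ∂μ := lintegral_mono_ae <| hd.mono fun _ hx ↦ ENNReal.div_le_div_left hx _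

namespace IsRadialWeight

variable {w : ℝ → ℝ}

lemma integrableOn_mul_self (hw : IsRadialWeight w) :
    IntegrableOn (fun s ↦ s * w s) (Ico 0 1) := by
  refine hw.2.1.mono' (aestronglyMeasurable_id.mul hw.2.1.aestronglyMeasurable) ?_
  filter_upwards [ae_restrict_mem measurableSet_Ico] with s ⟨hs0, hs1⟩
  rw [norm_mul, Real.norm_of_nonneg hs0, Real.norm_of_nonneg (hw.1 s ⟨hs0, hs1⟩)]
  exact mul_le_of_le_one_left (hw.1 s ⟨hs0, hs1⟩) hs1.le

lemma hat1_antitoneOn (hw : IsRadialWeight w) : AntitoneOn (hat1 w) (Ici 0) := by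
  intro a ha b _ hab
  have hsub : Ioo a 1 ⊆ Ico 0 1 := fun s hs ↦ ⟨le_trans ha hs.1.le, hs.2⟩
  refine setIntegral_mono_set (hw.integrableOn_mul_self.mono_set hsub) ?_
    (Ioo_subset_Ioo_left hab).eventuallyLE
  filter_upwards [ae_restrict_mem measurableSet_Ioo] with s hs
  exact mul_nonneg (hsub hs).1 (hw.1 s (hsub hs))

end IsRadialWeight

theorem maximal_le_two_stieltjes_general (w : ℝ → ℝ) (hw : IsRadialWeight w)
    (f : ℂ → ℝ) (hfpos : ∀ z, 0 ≤ f z) :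
    ∀ z : ℂ, z ∈ Metric.ball (0:ℂ) 1 → z ≠ 0 → MradE w f z ≤ 2 * SE w f z := by
  intro z _ _
  refine iSup₂_le fun b ⟨hb0, hbz⟩ ↦ ?_
  set g : ℝ → ℝ≥0∞ := fun s ↦ ENNReal.ofReal (f ((s / ‖z‖) • z) * (s * w s))
  have hden : ∀ s ∈ Ioo b 1,
      ENNReal.ofReal (hat1 w s + hat1 w ‖z‖) ≤ 2 * ENNReal.ofReal (hat1 w b) :=
    fun s hs ↦ calc
      _ ≤ ENNReal.ofReal (hat1 w s) + ENNReal.ofReal (hat1 w ‖z‖) := ENNReal.ofReal_add_le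
      _ ≤ ENNReal.ofReal (hat1 w b) + ENNReal.ofReal (hat1 w b) := by
        gcongr
        · exact hw.hat1_antitoneOn hb0 (hb0.trans hs.1.le) hs.1.le
        · exact hw.hat1_antitoneOn hb0 (hb0.trans hbz.le) hbz.le
      _ = 2 * ENNReal.ofReal (hat1 w b) := (two_mul _).symm
  calc (∫⁻ s in Ioo b 1, ENNReal.ofReal (|f ((s / ‖z‖) • z)| * (s * w s))) /
        ENNReal.ofReal (hat1 w b)
      = 2 * ((∫⁻ s in Ioo b 1, g s) / (2 * ENNReal.ofReal (hat1 w b))) := by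
        simp_rw [g, abs_of_nonneg (hfpos _), ← mul_div_assoc,
          ENNReal.mul_div_mul_left _ _ two_ne_zero ENNReal.ofNat_ne_top]
    _ ≤ 2 * ∫⁻ s in Ioo b 1, g s / ENNReal.ofReal (hat1 w s + hat1 w ‖z‖) := by
        gcongr
        exact lintegral_div_le_lintegral_div_of_ae_le
          ((ae_restrict_mem measurableSet_Ioo).mono hden)
    _ ≤ 2 * SE w f z := by
        gcongr
        exact lintegral_mono_set (Ioo_subset_Ioo_left hb0)

/-- Let `ω` be a radial weight and `f` a nonnegative measurable function on
`𝔻`. Then `M_{ω₁,rad}(f)(z) ≤ 2 S_{ω₁,rad}(f)(z)` for every `z ∈ 𝔻 \ {0}`. -/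
theorem maximal_le_two_stieltjes (w : ℝ → ℝ) (hw : IsRadialWeight w)
    (f : ℂ → ℝ) (hf : Measurable f) (hfpos : ∀ z, 0 ≤ f z) :
    ∀ z : ℂ, z ∈ Metric.ball (0:ℂ) 1 → z ≠ 0 → MradE w f z ≤ 2 * SE w f z :=
  maximal_le_two_stieltjes_general w hw f hfpos
end
end

section
/- Let 1 < p < ∞, p' = p/(p−1), let ω be a radial weight, and let ν : [0,1) → (0,∞) be measurable with ν ∈ L¹_ω([0,1)) and A_p(ω,ων) < ∞. If 0 ≤ a < b < 1 satisfy ω̂₁(a) ≤ 2 ∫_a^b s ω(s) ds, then ∫_a¹ ν(s)^{−p'/p} s ω(s) ds ≤ (2 A_p(ω,ων))^{p'} ∫_a^b ν(s)^{−p'/p} s ω(s) ds. -/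
/-!
With `σ = s ω ν^{-p'/p}`, Hölder's inequality for the splitting
`s ω = (s ω ν)^{1/p} σ^{1/p'}` on `(a, b)` and the hypothesis on `ω̂₁(a)` give
`ω̂₁(a) ≤ 2 (∫_a^b s ω ν)^{1/p} (∫_a^b σ)^{1/p'}`, while the `A_p` condition at `r = a` gives
`(∫_a^1 s ω ν)^{1/p} (∫_a^1 σ)^{1/p'} ≤ A_p(ω,ων) ω̂₁(a)`. After shrinking `∫_a^1 s ω ν` to
`∫_a^b s ω ν`, this common factor is positive (as `ω̂₁(a) > 0`) and finite (as `ν ∈ L¹_ω`), so it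
cancels; raising to the power `p'` gives the claim.
-/

open MeasureTheory Set Metric
open scoped ENNReal NNReal

noncomputable section

lemma integrableOn_Ico_id_mul {f : ℝ → ℝ} {a b : ℝ} (hf : IntegrableOn f (Ico a b)) :
    IntegrableOn (fun s => s * f s) (Ico a b) :=
  (integrableOn_Icc_iff_integrableOn_Ico).1 <|
    ((integrableOn_Icc_iff_integrableOn_Ico).2 hf).continuousOn_mul continuousOn_id isCompact_Icc

lemma lintegral_ofReal_le_Lp_mul_Lq_of_weight {α : Type*} [MeasurableSpace α] (μ : Measure α)
    {p q : ℝ} (hpq : p.HolderConjugate q) {f g : α → ℝ} (hf : AEMeasurable f μ)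
    (hg : AEMeasurable g μ) (hf0 : ∀ᵐ x ∂μ, 0 ≤ f x) (hg0 : ∀ᵐ x ∂μ, 0 < g x) :
    ∫⁻ x, ENNReal.ofReal (f x) ∂μ ≤
      (∫⁻ x, ENNReal.ofReal (f x * g x) ∂μ) ^ (1 / p) *
        (∫⁻ x, ENNReal.ofReal (f x * g x ^ (-q / p)) ∂μ) ^ (1 / q) := by
  have hsplit : ∀ {x y : ℝ}, 0 ≤ x → 0 < y →
      (x * y) ^ (1 / p) * (x * y ^ (-q / p)) ^ (1 / q) = x := by
    intro x y hx hy
    have hq : -q / p * (1 / q) = -(1 / p) := by field_simp [hpq.symm.ne_zero]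
    have h1 : 1 / p + 1 / q = 1 := by simpa only [one_div] using hpq.inv_add_inv_eq_one
    rw [Real.mul_rpow hx hy.le, Real.mul_rpow hx (Real.rpow_nonneg hy.le _),
      ← Real.rpow_mul hy.le, hq, mul_mul_mul_comm,
      ← Real.rpow_add' hx (by rw [h1]; exact one_ne_zero), ← Real.rpow_add hy, h1,
      add_neg_cancel, Real.rpow_one, Real.rpow_zero, mul_one]
  have hF : AEMeasurable (fun x => ENNReal.ofReal (f x * g x)) μ := (hf.mul hg).ennreal_ofReal
  have hG : AEMeasurable (fun x => ENNReal.ofReal (f x * g x ^ (-q / p))) μ :=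
    (hf.mul (hg.pow_const _)).ennreal_ofReal
  calc ∫⁻ x, ENNReal.ofReal (f x) ∂μ
      = ∫⁻ x, ENNReal.ofReal (f x * g x) ^ (1 / p) *
          ENNReal.ofReal (f x * g x ^ (-q / p)) ^ (1 / q) ∂μ := by
        refine lintegral_congr_ae ?_
        filter_upwards [hf0, hg0] with x hx hy
        rw [ENNReal.ofReal_rpow_of_nonneg (by positivity) (by simp [hpq.nonneg]),
          ENNReal.ofReal_rpow_of_nonneg (by positivity) (by simp [hpq.symm.nonneg]),
          ← ENNReal.ofReal_mul (by positivity), hsplit hx hy]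
    _ ≤ _ := by
        have := ENNReal.lintegral_mul_le_Lp_mul_Lq μ hpq
          (hF.pow_const (1 / p)) (hG.pow_const (1 / q))
        simpa only [Pi.mul_apply, ← ENNReal.rpow_mul, one_div_mul_cancel hpq.ne_zero,
          one_div_mul_cancel hpq.symm.ne_zero, ENNReal.rpow_one] using this

lemma ENNReal.le_rpow_mul_of_rpow_mul_le {X Y C N : ℝ≥0∞} {q : ℝ} (hq : 0 < q)
    (hN₀ : N ≠ 0) (hN : N ≠ ⊤) (h : X ^ (1 / q) * N ≤ C * Y ^ (1 / q) * N) : X ≤ C ^ q * Y := by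
  have h' := ENNReal.rpow_le_rpow ((ENNReal.mul_le_mul_iff_left hN₀ hN).1 h) hq.le
  rwa [← ENNReal.rpow_mul, one_div_mul_cancel hq.ne', ENNReal.rpow_one,
    ENNReal.mul_rpow_of_nonneg _ _ hq.le, ← ENNReal.rpow_mul, one_div_mul_cancel hq.ne',
    ENNReal.rpow_one] at h'

lemma le_Ap2_mul_hat1 {p : ℝ} {w v : ℝ → ℝ} {r : ℝ} (hr : r ∈ Ico (0 : ℝ) 1)
    (hpos : 0 < hat1 w r) :
    (∫⁻ s in Ioo r 1, ENNReal.ofReal (s * w s * v s)) ^ (1 / p) *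
        (∫⁻ s in Ioo r 1, ENNReal.ofReal (s * w s * v s ^ (-(p / (p - 1)) / p))) ^
          (1 - 1 / p) ≤
      Ap2 p w v * ENNReal.ofReal (hat1 w r) :=
  (ENNReal.div_le_iff (ENNReal.ofReal_pos.2 hpos).ne' ENNReal.ofReal_ne_top).1 <| by
    rw [Ap2]; exact le_iSup₂_of_le r hr le_rfl

namespace IsRadialWeight

variable {w : ℝ → ℝ} (hw : IsRadialWeight w)
include hw

lemma id_mul_nonneg {s : ℝ} (hs : s ∈ Ico (0 : ℝ) 1) : 0 ≤ s * w s :=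
  mul_nonneg hs.1 (hw.1 s hs)

lemma integrableOn_id_mul : IntegrableOn (fun s => s * w s) (Ico 0 1) :=
  integrableOn_Ico_id_mul hw.2.1

lemma hat1_pos {r : ℝ} (hr : r ∈ Ico (0 : ℝ) 1) : 0 < hat1 w r := by
  obtain ⟨t, hrt, ht1⟩ := exists_between hr.2
  have ht : t ∈ Ico (0 : ℝ) 1 := ⟨hr.1.trans hrt.le, ht1⟩
  have hIt : Ioo t 1 ⊆ Ico (0 : ℝ) 1 := fun x hx => ⟨ht.1.trans hx.1.le, hx.2⟩
  have hIr : Ioo r 1 ⊆ Ico (0 : ℝ) 1 := fun x hx => ⟨hr.1.trans hx.1.le, hx.2⟩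
  calc 0 < t * hatw w t := mul_pos (hr.1.trans_lt hrt) (hw.2.2 t ht)
    _ = ∫ s in Ioo t 1, t * w s := (integral_const_mul t _).symm
    _ ≤ ∫ s in Ioo t 1, s * w s :=
        setIntegral_mono_on ((hw.2.1.mono_set hIt).const_mul t)
          (hw.integrableOn_id_mul.mono_set hIt) measurableSet_Ioo
          fun x hx => mul_le_mul_of_nonneg_right hx.1.le (hw.1 x (hIt hx))
    _ ≤ hat1 w r :=
        setIntegral_mono_set (hw.integrableOn_id_mul.mono_set hIr)
          ((ae_restrict_mem measurableSet_Ioo).mono fun x hx => hw.id_mul_nonneg (hIr hx))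
          (Ioo_subset_Ioo_left hrt.le).eventuallyLE

lemma ofReal_hat1_le_two_mul_Lp_mul_Lq {p q : ℝ} (hpq : p.HolderConjugate q) {v : ℝ → ℝ}
    (hvm : Measurable v) (hvpos : ∀ s ∈ Ico (0 : ℝ) 1, 0 < v s) {a b : ℝ} (ha : 0 ≤ a)
    (hb : b < 1) (hhat : hat1 w a ≤ 2 * ∫ s in Ioo a b, s * w s) :
    ENNReal.ofReal (hat1 w a) ≤
      2 * ((∫⁻ s in Ioo a b, ENNReal.ofReal (s * w s * v s)) ^ (1 / p) *
        (∫⁻ s in Ioo a b, ENNReal.ofReal (s * w s * v s ^ (-q / p))) ^ (1 / q)) := by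
  have hI : Ioo a b ⊆ Ico (0 : ℝ) 1 := fun x hx => ⟨ha.trans hx.1.le, hx.2.trans hb⟩
  have hI0 : ∀ᵐ x ∂volume.restrict (Ioo a b), 0 ≤ x * w x :=
    (ae_restrict_mem measurableSet_Ioo).mono fun x hx => hw.id_mul_nonneg (hI hx)
  calc ENNReal.ofReal (hat1 w a)
      ≤ ENNReal.ofReal (2 * ∫ s in Ioo a b, s * w s) := ENNReal.ofReal_le_ofReal hhat
    _ = 2 * ∫⁻ s in Ioo a b, ENNReal.ofReal (s * w s) := by
        rw [ENNReal.ofReal_mul zero_le_two, ENNReal.ofReal_ofNat,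
          ofReal_integral_eq_lintegral_ofReal (hw.integrableOn_id_mul.mono_set hI) hI0]
    _ ≤ _ := by
        grw [lintegral_ofReal_le_Lp_mul_Lq_of_weight _ hpq (f := fun s => s * w s)
          (aemeasurable_id.mul (hw.2.1.mono_set hI).aemeasurable) hvm.aemeasurable hI0
          ((ae_restrict_mem measurableSet_Ioo).mono fun x hx => hvpos x (hI hx))]

end IsRadialWeight

theorem tail_sigma_estimate_general (p : ℝ) (hp : 1 < p) (w v : ℝ → ℝ)
    (hw : IsRadialWeight w) (hvm : Measurable v) (hvpos : ∀ s ∈ Set.Ico (0:ℝ) 1, 0 < v s)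
    (hvL1 : MeasureTheory.IntegrableOn (fun s => v s * w s) (Set.Ico (0:ℝ) 1))
    (a b : ℝ) (ha : 0 ≤ a) (hab : a < b) (hb : b < 1)
    (hhat : hat1 w a ≤ 2 * ∫ s in Set.Ioo a b, s * w s) :
    (∫⁻ s in Set.Ioo a 1, ENNReal.ofReal (v s ^ (-(p / (p - 1)) / p) * (s * w s))) ≤
      (2 * Ap2 p w v) ^ (p / (p - 1)) *
        ∫⁻ s in Set.Ioo a b, ENNReal.ofReal (v s ^ (-(p / (p - 1)) / p) * (s * w s)) := by
  set q := p / (p - 1)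
  have hpq : p.HolderConjugate q := .conjExponent hp
  have ha1 : a ∈ Ico (0 : ℝ) 1 := ⟨ha, hab.trans hb⟩
  have hI : Ioo a b ⊆ Ico (0 : ℝ) 1 := fun x hx => ⟨ha.trans hx.1.le, hx.2.trans hb⟩
  simp_rw [mul_comm (v _ ^ (_ : ℝ))]
  set M := ∫⁻ s in Ioo a b, ENNReal.ofReal (s * w s * v s)
  set σ := ∫⁻ s in Ioo a b, ENNReal.ofReal (s * w s * v s ^ (-q / p))
  set σ₁ := ∫⁻ s in Ioo a 1, ENNReal.ofReal (s * w s * v s ^ (-q / p))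
  have hhat_le := hw.ofReal_hat1_le_two_mul_Lp_mul_Lq hpq hvm hvpos ha hb hhat
  have hM₀ : M ^ (1 / p) ≠ 0 := by
    intro h
    rw [h, zero_mul, mul_zero, nonpos_iff_eq_zero, ENNReal.ofReal_eq_zero] at hhat_le
    exact (hw.hat1_pos ha1).not_ge hhat_le
  have hM : M ^ (1 / p) ≠ ⊤ := by
    have : IntegrableOn (fun s => s * w s * v s) (Ioo a b) :=
      ((integrableOn_Ico_id_mul hvL1).mono_set hI).congr_fun (fun s _ => by ring)
        measurableSet_Ioo
    exact ENNReal.rpow_ne_top_of_nonneg (by simp [hpq.nonneg]) this.setLIntegral_lt_top.ne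
  refine ENNReal.le_rpow_mul_of_rpow_mul_le hpq.symm.pos hM₀ hM ?_
  calc σ₁ ^ (1 / q) * M ^ (1 / p)
      ≤ σ₁ ^ (1 / q) * (∫⁻ s in Ioo a 1, ENNReal.ofReal (s * w s * v s)) ^ (1 / p) := by
        gcongr
        exact lintegral_mono_set (Ioo_subset_Ioo_right hb.le)
    _ ≤ Ap2 p w v * ENNReal.ofReal (hat1 w a) := by
        rw [mul_comm, one_div q, ← hpq.one_sub_inv, ← one_div]
        exact le_Ap2_mul_hat1 ha1 (hw.hat1_pos ha1)
    _ ≤ Ap2 p w v * (2 * (M ^ (1 / p) * σ ^ (1 / q))) := by grw [hhat_le]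
    _ = 2 * Ap2 p w v * σ ^ (1 / q) * M ^ (1 / p) := by ring

/-- Lemma 5. Let `1 < p < ∞`, `ω` a radial weight, `ν : [0,1) → (0,∞)`
measurable with `ν ∈ L¹_ω([0,1))` and `A_p(ω,ων) < ∞`. If `0 ≤ a < b < 1` satisfy
`ω̂₁(a) ≤ 2 ∫_a^b s ω(s) ds`, then
`∫_a^1 ν^{-p'/p} s ω ds ≤ (2 A_p(ω,ων))^{p'} ∫_a^b ν^{-p'/p} s ω ds`. -/
theorem tail_sigma_estimate (p : ℝ) (hp : 1 < p) (w v : ℝ → ℝ)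
    (hw : IsRadialWeight w) (hvm : Measurable v) (hvpos : ∀ s ∈ Set.Ico (0:ℝ) 1, 0 < v s)
    (hvL1 : MeasureTheory.IntegrableOn (fun s => v s * w s) (Set.Ico (0:ℝ) 1))
    (hAp : Ap2 p w v < ⊤)
    (a b : ℝ) (ha : 0 ≤ a) (hab : a < b) (hb : b < 1)
    (hhat : hat1 w a ≤ 2 * ∫ s in Set.Ioo a b, s * w s) :
    (∫⁻ s in Set.Ioo a 1, ENNReal.ofReal (v s ^ (-(p / (p - 1)) / p) * (s * w s))) ≤
      (2 * Ap2 p w v) ^ (p / (p - 1)) *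
        ∫⁻ s in Set.Ioo a b, ENNReal.ofReal (v s ^ (-(p / (p - 1)) / p) * (s * w s)) :=
  tail_sigma_estimate_general p hp w v hw hvm hvpos hvL1 a b ha hab hb hhat

end
end

section
/- Let η be a radial weight and 1 < p < ∞. Then there exists a constant C > 0, depending only on p, such that ∫₀¹ (M_η f(t))^p η(t) dt ≤ C ∫₀¹ |f(t)|^p η(t) dt for every f ∈ L^p((0,1), η(s)ds). -/
/-!
The maximal function is monotone in `t`, so its superlevel set `{c < M g}` in `(0,1)` is covered
by the intervals `(b,1)` on which the `ω`-average of `g` exceeds `c`; each of these has measure at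
most `c⁻¹ ∫ g dω`, and a directed union of intervals `(b,1)` is exhausted by countably many of
them. This is the weak type `(1,1)` bound with constant `1`, without any covering lemma. Splitting
`g` at height `λ/2` gives `ω {λ < M g} ≤ (λ/2)⁻¹ ∫_{g > λ/2} g dω`, and integrating this against
`p λ^(p-1) dλ` (layer cake and Tonelli) gives the strong type `(p,p)` bound with constant
`2^p p/(p-1)`. The radial weight enters only through the measure `η(s) ds` on `[0,1)`.
-/

open MeasureTheory Set Metric
open scoped ENNReal NNReal

noncomputable section

/-- The one-dimensional maximal function
`M_η f(t) = sup_{0 ≤ b < t} (1/η̂(b)) ∫_b^1 |f(s)| η(s) ds`. -/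
def Mone (η : ℝ → ℝ) (f : ℝ → ℝ) (t : ℝ) : ℝ≥0∞ :=
  ⨆ b ∈ Set.Ico (0:ℝ) t,
    (∫⁻ s in Set.Ioo b 1, ENNReal.ofReal (|f s| * η s)) / ENNReal.ofReal (hatw η b)

lemma lintegral_Ioo_ofReal_mul_rpow_sub_one {q r : ℝ} (hq : 0 < q) (hr : 0 ≤ r) :
    ∫⁻ t in Ioo 0 r, ENNReal.ofReal (q * t ^ (q - 1)) = ENNReal.ofReal (r ^ q) := by
  have hint : IntegrableOn (fun t => q * t ^ (q - 1)) (Ioo 0 r) :=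
    ((intervalIntegral.intervalIntegrable_rpow' (by linarith)).const_mul q).1.mono_set
      Ioo_subset_Ioc_self
  have hnn : ∀ᵐ t ∂volume.restrict (Ioo 0 r), 0 ≤ q * t ^ (q - 1) :=
    ae_restrict_of_forall_mem measurableSet_Ioo fun t ht => by have := ht.1; positivity
  rw [← ofReal_integral_eq_lintegral_ofReal hint hnn, ← integral_Ioc_eq_integral_Ioo,
    ← intervalIntegral.integral_of_le hr, intervalIntegral.integral_const_mul,
    integral_rpow (Or.inl (by linarith)), sub_add_cancel, Real.zero_rpow hq.ne']
  congr 1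
  field_simp
  simp

lemma lintegral_Ioi_indicator_ofReal_lt (x : ℝ≥0∞) {q : ℝ} (hq : 0 < q) :
    ∫⁻ t in Ioi 0, {t | ENNReal.ofReal t < x}.indicator
      (fun t => ENNReal.ofReal (q * t ^ (q - 1))) t = x ^ q := by
  have hmeas : MeasurableSet {t : ℝ | ENNReal.ofReal t < x} :=
    measurableSet_lt ENNReal.measurable_ofReal measurable_const
  rw [lintegral_indicator hmeas, Measure.restrict_restrict hmeas]
  rcases eq_or_ne x ⊤ with rfl | hx
  · simp only [ENNReal.ofReal_lt_top, ofPred_true, univ_inter, ENNReal.top_rpow_of_pos hq]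
    refine ENNReal.eq_top_of_forall_nnreal_le fun r => ?_
    calc (r : ℝ≥0∞) = ENNReal.ofReal (((r : ℝ) ^ q⁻¹) ^ q) := by
          rw [Real.rpow_inv_rpow r.coe_nonneg hq.ne', ENNReal.ofReal_coe_nnreal]
      _ = ∫⁻ t in Ioo 0 ((r : ℝ) ^ q⁻¹), ENNReal.ofReal (q * t ^ (q - 1)) :=
          (lintegral_Ioo_ofReal_mul_rpow_sub_one hq (by positivity)).symm
      _ ≤ _ := lintegral_mono_set Ioo_subset_Ioi_self
  · have hset : {t : ℝ | ENNReal.ofReal t < x} ∩ Ioi 0 = Ioo 0 x.toReal := by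
      ext t
      simp only [mem_inter_iff, mem_ofPred_eq, mem_Ioi, mem_Ioo]
      constructor
      · rintro ⟨hlt, ht⟩
        exact ⟨ht, (ENNReal.ofReal_lt_iff_lt_toReal ht.le hx).1 hlt⟩
      · rintro ⟨ht, hlt⟩
        exact ⟨(ENNReal.ofReal_lt_iff_lt_toReal ht.le hx).2 hlt, ht⟩
    rw [hset, lintegral_Ioo_ofReal_mul_rpow_sub_one hq ENNReal.toReal_nonneg,
      ← ENNReal.ofReal_rpow_of_nonneg ENNReal.toReal_nonneg hq.le, ENNReal.ofReal_toReal hx]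

/-- Unlike `lintegral_rpow_eq_lintegral_meas_lt_mul`, here `F` may take the value `∞`. -/
theorem lintegral_rpow_eq_lintegral_meas_ofReal_lt_mul {α : Type*} [MeasurableSpace α]
    (μ : Measure α) [SFinite μ] {F : α → ℝ≥0∞} (hF : Measurable F) {q : ℝ} (hq : 0 < q) :
    ∫⁻ a, F a ^ q ∂μ =
      ∫⁻ t in Ioi 0, μ {a | ENNReal.ofReal t < F a} * ENNReal.ofReal (q * t ^ (q - 1)) := by
  calc ∫⁻ a, F a ^ q ∂μ
      = ∫⁻ a, (∫⁻ t in Ioi 0, {t | ENNReal.ofReal t < F a}.indicator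
          (fun t => ENNReal.ofReal (q * t ^ (q - 1))) t) ∂μ :=
        lintegral_congr fun a => (lintegral_Ioi_indicator_ofReal_lt (F a) hq).symm
    _ = ∫⁻ t in Ioi 0, ∫⁻ a, {a | ENNReal.ofReal t < F a}.indicator
          (fun _ => ENNReal.ofReal (q * t ^ (q - 1))) a ∂μ := by
        refine lintegral_lintegral_swap (Measurable.aemeasurable ?_)
        exact Measurable.indicator (by fun_prop)
          (measurableSet_lt (by fun_prop) (hF.comp measurable_fst))
    _ = _ := by
        simp only [lintegral_indicator_const (measurableSet_lt measurable_const hF), mul_comm]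

lemma inv_half_ofReal_mul_ofReal_rpow {p t : ℝ} (hp : 1 < p) (ht : 0 < t) :
    (ENNReal.ofReal t / 2)⁻¹ * ENNReal.ofReal (p * t ^ (p - 1)) =
      ENNReal.ofReal (2 * p / (p - 1)) * ENNReal.ofReal ((p - 1) * t ^ (p - 1 - 1)) := by
  have hp1 : 0 < p - 1 := by linarith
  rw [← ENNReal.ofReal_ofNat 2, ← ENNReal.ofReal_div_of_pos two_pos,
    ← ENNReal.ofReal_inv_of_pos (by positivity), ← ENNReal.ofReal_mul (by positivity),
    ← ENNReal.ofReal_mul (by positivity), Real.rpow_sub_one ht.ne' (p - 1)]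
  congr 1
  field_simp

lemma lintegral_Ioi_ite_half_lt_mul (x : ℝ≥0∞) {p : ℝ} (hp : 1 < p) :
    ∫⁻ t in Ioi 0, (if ENNReal.ofReal t / 2 < x then x else 0) *
        ((ENNReal.ofReal t / 2)⁻¹ * ENNReal.ofReal (p * t ^ (p - 1))) =
      ENNReal.ofReal (2 ^ p * p / (p - 1)) * x ^ p := by
  have hp1 : 0 < p - 1 := by linarith
  set E : Set ℝ := {t | ENNReal.ofReal t < 2 * x}
  have hpt : ∀ t ∈ Ioi (0 : ℝ), (if ENNReal.ofReal t / 2 < x then x else 0) *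
        ((ENNReal.ofReal t / 2)⁻¹ * ENNReal.ofReal (p * t ^ (p - 1))) =
      x * ENNReal.ofReal (2 * p / (p - 1)) *
        E.indicator (fun t => ENNReal.ofReal ((p - 1) * t ^ (p - 1 - 1))) t := by
    intro t ht
    have hcond : ENNReal.ofReal t / 2 < x ↔ t ∈ E := by
      rw [ENNReal.div_lt_iff (Or.inl two_ne_zero) (Or.inl ENNReal.ofNat_ne_top), mul_comm]
      rfl
    rw [inv_half_ofReal_mul_ofReal_rpow hp ht]
    by_cases h : ENNReal.ofReal t / 2 < x
    · rw [if_pos h, indicator_of_mem (hcond.1 h)]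
      ring
    · rw [if_neg h, indicator_of_notMem (mt hcond.2 h)]
      ring
  have hconst : ENNReal.ofReal (2 * p / (p - 1)) * 2 ^ (p - 1) =
      ENNReal.ofReal (2 ^ p * p / (p - 1)) := by
    rw [← ENNReal.ofReal_ofNat 2, ENNReal.ofReal_rpow_of_nonneg zero_le_two hp1.le,
      ← ENNReal.ofReal_mul (by positivity), Real.rpow_sub_one two_ne_zero]
    congr 1
    field_simp
  rw [setLIntegral_congr_fun measurableSet_Ioi hpt, lintegral_const_mul _
      (Measurable.indicator (by fun_prop) (measurableSet_lt (by fun_prop) measurable_const)),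
    lintegral_Ioi_indicator_ofReal_lt (2 * x) hp1, ENNReal.mul_rpow_of_nonneg _ _ hp1.le,
    ← hconst]
  calc x * ENNReal.ofReal (2 * p / (p - 1)) * (2 ^ (p - 1) * x ^ (p - 1))
      = ENNReal.ofReal (2 * p / (p - 1)) * 2 ^ (p - 1) * (x ^ (1 : ℝ) * x ^ (p - 1)) := by
        rw [ENNReal.rpow_one]
        ring
    _ = ENNReal.ofReal (2 * p / (p - 1)) * 2 ^ (p - 1) * x ^ p := by
        rw [← ENNReal.rpow_add_of_nonneg _ _ zero_le_one hp1.le, add_sub_cancel]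

lemma measure_biUnion_Ioo_le {μ : Measure ℝ} {S : Set ℝ} {a : ℝ} {C : ℝ≥0∞}
    (h : ∀ b ∈ S, μ (Ioo b a) ≤ C) : μ (⋃ b ∈ S, Ioo b a) ≤ C := by
  obtain ⟨T, hTS, hTc, hTU⟩ :=
    TopologicalSpace.isOpen_biUnion_countable S (fun b => Ioo b a) fun _ _ => isOpen_Ioo
  rw [← hTU, measure_biUnion_eq_iSup hTc]
  · exact iSup₂_le fun b hb => h b (hTS hb)
  · intro x hx y hy
    rcases le_total x y with hxy | hxy
    · exact ⟨x, hx, subset_rfl, Ioo_subset_Ioo_left hxy⟩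
    · exact ⟨y, hy, Ioo_subset_Ioo_left hxy, subset_rfl⟩

lemma ENNReal.le_inv_mul_of_lt_div {a b c : ℝ≥0∞} (hc : c ≠ 0) (h : c < a / b) :
    b ≤ c⁻¹ * a := by
  rw [← ENNReal.div_eq_inv_mul, ENNReal.le_div_iff_mul_le (Or.inl hc) (Or.inl h.ne_top), mul_comm]
  exact ENNReal.mul_le_of_le_div h.le

/-- `M_η` for an arbitrary measure `ω` in place of `η(s) ds`; see `Mone_eq_tailMaximal`. -/
def tailMaximal (ω : Measure ℝ) (g : ℝ → ℝ≥0∞) (t : ℝ) : ℝ≥0∞ :=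
  ⨆ b ∈ Ico (0 : ℝ) t, (∫⁻ s in Ioo b 1, g s ∂ω) / ω (Ioo b 1)

section tailMaximal

variable {ω : Measure ℝ} {g : ℝ → ℝ≥0∞}

lemma monotone_tailMaximal : Monotone (tailMaximal ω g) :=
  fun _ _ h => biSup_mono fun _ hb => ⟨hb.1, hb.2.trans_le h⟩

lemma measurable_tailMaximal : Measurable (tailMaximal ω g) :=
  monotone_tailMaximal.measurable

theorem tailMaximal_weakType_one {c : ℝ≥0∞} (hc : c ≠ 0) :
    ω {t ∈ Ioo 0 1 | c < tailMaximal ω g t} ≤ c⁻¹ * ∫⁻ s in Ioo 0 1, g s ∂ω := by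
  set S := {b : ℝ | 0 ≤ b ∧ c < (∫⁻ s in Ioo b 1, g s ∂ω) / ω (Ioo b 1)}
  have hsub : {t ∈ Ioo 0 1 | c < tailMaximal ω g t} ⊆ ⋃ b ∈ S, Ioo b 1 := by
    rintro t ⟨ht, hct⟩
    simp only [tailMaximal, lt_iSup_iff] at hct
    obtain ⟨b, hb, hcb⟩ := hct
    exact mem_biUnion ⟨hb.1, hcb⟩ ⟨hb.2, ht.2⟩
  refine (measure_mono hsub).trans (measure_biUnion_Ioo_le fun b hb => ?_)
  calc ω (Ioo b 1) ≤ c⁻¹ * ∫⁻ s in Ioo b 1, g s ∂ω := ENNReal.le_inv_mul_of_lt_div hc hb.2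
    _ ≤ c⁻¹ * ∫⁻ s in Ioo 0 1, g s ∂ω := by
      gcongr
      exact hb.1

lemma tailMaximal_le_indicator_add (c : ℝ≥0∞) (t : ℝ) :
    tailMaximal ω g t ≤ tailMaximal ω ({s | c < g s}.indicator g) t + c := by
  refine iSup₂_le fun b hb => ?_
  have hsplit : ∀ s, g s ≤ {s | c < g s}.indicator g s + c := fun s => by
    by_cases h : c < g s
    · simp [h]
    · simp [h, not_lt.1 h]
  calc (∫⁻ s in Ioo b 1, g s ∂ω) / ω (Ioo b 1)
      ≤ ((∫⁻ s in Ioo b 1, {s | c < g s}.indicator g s ∂ω) + c * ω (Ioo b 1)) / ω (Ioo b 1) := by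
        gcongr
        calc _ ≤ ∫⁻ s in Ioo b 1, ({s | c < g s}.indicator g s + c) ∂ω := lintegral_mono hsplit
          _ = _ := by rw [lintegral_add_right _ measurable_const, setLIntegral_const]
    _ = (∫⁻ s in Ioo b 1, {s | c < g s}.indicator g s ∂ω) / ω (Ioo b 1)
        + c * (ω (Ioo b 1) / ω (Ioo b 1)) := by rw [ENNReal.add_div, mul_div_assoc]
    _ ≤ tailMaximal ω ({s | c < g s}.indicator g) t + c := by
      gcongr
      · exact le_iSup₂ (f := fun b (_ : b ∈ Ico (0 : ℝ) t) =>
          (∫⁻ s in Ioo b 1, {s | c < g s}.indicator g s ∂ω) / ω (Ioo b 1)) b hb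
      · exact mul_le_of_le_one_right' ENNReal.div_self_le_one

lemma tailMaximal_distribution_le {r : ℝ≥0∞} (hr0 : r ≠ 0) (hr : r ≠ ⊤) :
    ω {t ∈ Ioo 0 1 | r < tailMaximal ω g t} ≤
      (r / 2)⁻¹ * ∫⁻ s in Ioo 0 1, {s | r / 2 < g s}.indicator g s ∂ω := by
  have hsub : {t ∈ Ioo 0 1 | r < tailMaximal ω g t} ⊆
      {t ∈ Ioo 0 1 | r / 2 < tailMaximal ω ({s | r / 2 < g s}.indicator g) t} := by
    refine fun t ht =>
      ⟨ht.1, (ENNReal.add_lt_add_iff_right (ENNReal.div_ne_top hr two_ne_zero)).1 ?_⟩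
    rw [ENNReal.add_halves]
    exact ht.2.trans_le (tailMaximal_le_indicator_add (r / 2) t)
  exact (measure_mono hsub).trans (tailMaximal_weakType_one (ENNReal.half_pos hr0).ne')

theorem tailMaximal_strongType [SFinite ω] (hg : Measurable g) {p : ℝ} (hp : 1 < p) :
    ∫⁻ t in Ioo 0 1, tailMaximal ω g t ^ p ∂ω ≤
      ENNReal.ofReal (2 ^ p * p / (p - 1)) * ∫⁻ t in Ioo 0 1, g t ^ p ∂ω := by
  have hcut : ∀ t : ℝ, Measurable ({s | ENNReal.ofReal t / 2 < g s}.indicator g) := fun _ =>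
    hg.indicator (measurableSet_lt measurable_const hg)
  calc ∫⁻ t in Ioo 0 1, tailMaximal ω g t ^ p ∂ω
      = ∫⁻ t in Ioi 0, ω.restrict (Ioo 0 1) {a | ENNReal.ofReal t < tailMaximal ω g a} *
          ENNReal.ofReal (p * t ^ (p - 1)) :=
        lintegral_rpow_eq_lintegral_meas_ofReal_lt_mul _ measurable_tailMaximal (by linarith)
    _ ≤ ∫⁻ t in Ioi 0, ∫⁻ s in Ioo 0 1, {s | ENNReal.ofReal t / 2 < g s}.indicator g s *
          ((ENNReal.ofReal t / 2)⁻¹ * ENNReal.ofReal (p * t ^ (p - 1))) ∂ω := by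
        refine setLIntegral_mono' measurableSet_Ioi fun t ht => ?_
        rw [lintegral_mul_const _ (hcut t), Measure.restrict_apply' measurableSet_Ioo,
          inter_comm, ← mul_assoc, mul_comm _ (_⁻¹)]
        gcongr
        exact tailMaximal_distribution_le (ENNReal.ofReal_pos.2 ht).ne' ENNReal.ofReal_ne_top
    _ = ∫⁻ s in Ioo 0 1, (∫⁻ t in Ioi 0, {s | ENNReal.ofReal t / 2 < g s}.indicator g s *
          ((ENNReal.ofReal t / 2)⁻¹ * ENNReal.ofReal (p * t ^ (p - 1)))) ∂ω := by
        refine lintegral_lintegral_swap (μ := volume.restrict (Ioi (0 : ℝ)))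
          (ν := ω.restrict (Ioo 0 1)) (Measurable.aemeasurable (Measurable.mul ?_ (by fun_prop)))
        exact (hg.comp measurable_snd).indicator
          (measurableSet_lt (by fun_prop) (hg.comp measurable_snd))
    _ = ∫⁻ s in Ioo 0 1, ENNReal.ofReal (2 ^ p * p / (p - 1)) * g s ^ p ∂ω := by
        refine lintegral_congr fun s => ?_
        simpa only [indicator_apply, mem_ofPred_eq] using lintegral_Ioi_ite_half_lt_mul (g s) hp
    _ = _ := lintegral_const_mul _ (hg.pow_const p)

end tailMaximal

/-- The measure `η(s) ds` on `[0,1)`: a radial weight is only integrable and nonnegative there. -/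
def weightMeasure (η : ℝ → ℝ) : Measure ℝ :=
  (volume.restrict (Ico 0 1)).withDensity fun s => ENNReal.ofReal (η s)

section weightMeasure

variable {η : ℝ → ℝ}

instance : SFinite (weightMeasure η) := by
  unfold weightMeasure
  infer_instance

lemma setLIntegral_weightMeasure (hη : AEMeasurable η (volume.restrict (Ico 0 1)))
    {s : Set ℝ} (hs : MeasurableSet s) (hs1 : s ⊆ Ico 0 1) {F : ℝ → ℝ≥0∞} (hF : Measurable F) :
    ∫⁻ x in s, F x ∂weightMeasure η = ∫⁻ x in s, ENNReal.ofReal (η x) * F x := by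
  rw [weightMeasure, setLIntegral_withDensity_eq_lintegral_mul₀ hη.ennreal_ofReal
    hF.aemeasurable hs, Measure.restrict_restrict hs, inter_eq_left.2 hs1]
  rfl

lemma weightMeasure_Ioo (hη : IsRadialWeight η) {b : ℝ} (hb : 0 ≤ b) :
    weightMeasure η (Ioo b 1) = ENNReal.ofReal (hatw η b) := by
  have hsub : Ioo b 1 ⊆ Ico 0 1 := fun x hx => ⟨hb.trans hx.1.le, hx.2⟩
  rw [weightMeasure, withDensity_apply _ measurableSet_Ioo,
    Measure.restrict_restrict measurableSet_Ioo, inter_eq_left.2 hsub, hatw,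
    ofReal_integral_eq_lintegral_ofReal (hη.2.1.mono_set hsub)
      (ae_restrict_of_forall_mem measurableSet_Ioo fun x hx => hη.1 x (hsub hx))]

lemma Mone_eq_tailMaximal (hη : IsRadialWeight η) {f : ℝ → ℝ} (hf : Measurable f) (t : ℝ) :
    Mone η f t = tailMaximal (weightMeasure η) (fun s => ‖f s‖ₑ) t := by
  refine iSup_congr fun b => iSup_congr fun hb => ?_
  have hsub : Ioo b 1 ⊆ Ico 0 1 := fun x hx => ⟨hb.1.trans hx.1.le, hx.2⟩
  rw [weightMeasure_Ioo hη hb.1,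
    setLIntegral_weightMeasure hη.2.1.aemeasurable measurableSet_Ioo hsub hf.enorm]
  congr 1
  refine lintegral_congr fun s => ?_
  rw [ENNReal.ofReal_mul (abs_nonneg _), Real.enorm_eq_ofReal_abs, mul_comm]

end weightMeasure

/-- Lemma 6, strong type (p,p). Let `1 < p < ∞`. There is a constant
`C > 0`, depending only on `p`, such that for every radial weight `η` and every
`f ∈ L^p((0,1), η ds)` one has `∫_0^1 (M_η f)^p η dt ≤ C ∫_0^1 |f|^p η dt`. -/
theorem maximal_strong_type (p : ℝ) (hp : 1 < p) :
    ∃ C > (0:ℝ), ∀ η : ℝ → ℝ, IsRadialWeight η →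
      ∀ f : ℝ → ℝ, Measurable f →
        (∫⁻ t in Set.Ioo (0:ℝ) 1, ENNReal.ofReal (|f t| ^ p * η t)) < ⊤ →
        (∫⁻ t in Set.Ioo (0:ℝ) 1, Mone η f t ^ p * ENNReal.ofReal (η t)) ≤
          ENNReal.ofReal C * ∫⁻ t in Set.Ioo (0:ℝ) 1, ENNReal.ofReal (|f t| ^ p * η t) := by
  have hp1 : 0 < p - 1 := by linarith
  refine ⟨2 ^ p * p / (p - 1), by positivity, fun η hη f hf _ => ?_⟩
  have key := tailMaximal_strongType (ω := weightMeasure η) hf.enorm hp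
  rw [setLIntegral_weightMeasure hη.2.1.aemeasurable measurableSet_Ioo Ioo_subset_Ico_self
      (measurable_tailMaximal.pow_const p),
    setLIntegral_weightMeasure hη.2.1.aemeasurable measurableSet_Ioo Ioo_subset_Ico_self
      (hf.enorm.pow_const p)] at key
  convert key using 2
  · ext t
    rw [Mone_eq_tailMaximal hη hf, mul_comm]
  · refine lintegral_congr fun t => ?_
    rw [ENNReal.ofReal_mul (by positivity), Real.enorm_eq_ofReal_abs,
      ENNReal.ofReal_rpow_of_nonneg (abs_nonneg _) (by linarith), mul_comm]
end
end
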